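/- In the instance with n-1 'focused' players and one uniform player, every envy-free complete connected division must cut the cake exactly at the points i/n for i = 1, ..., n-1; consequently player n gets utility exactly 1/n and each focused player gets utility exactly 1/2. -/

import Mathlib

open MeasureTheory Set
open scoped ENNReal

/-- A connected division of the cake `[0,1]` among `n` players: each player gets an
open interval, the intervals are pairwise disjoint and contained in `[0,1]`. -/
structure ConnDiv (n : ℕ) where
  pieces : Fin n → Set ℝ
  isInterval : ∀ i, ∃ a b : ℝ, pieces i = Set.Ioo a b
  subset : ∀ i, pieces i ⊆ Set.Icc (0:ℝ) 1
  disj : Pairwise fun i j => Disjoint (pieces i) (pieces j)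

/-- A connected division is complete if the closures of the pieces cover `[0,1]`. -/
def ConnDiv.Complete {n : ℕ} (d : ConnDiv n) : Prop :=
  Set.Icc (0:ℝ) 1 ⊆ ⋃ i, closure (d.pieces i)

/-- Envy-freeness: every player weakly prefers her own piece. -/
def EnvyFree {n : ℕ} (v : Fin n → Measure ℝ) (d : ConnDiv n) : Prop :=
  ∀ i j, v i (d.pieces j) ≤ v i (d.pieces i)

/-- Utilitarian welfare: sum of own-piece values. -/
noncomputable def util {n : ℕ} (v : Fin n → Measure ℝ) (d : ConnDiv n) : ℝ≥0∞ :=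
  ∑ i, v i (d.pieces i)

/-- Egalitarian welfare: minimum own-piece value. -/
noncomputable def egal {n : ℕ} (v : Fin n → Measure ℝ) (d : ConnDiv n) : ℝ≥0∞ :=
  ⨅ i, v i (d.pieces i)

/-- The uniform measure of total mass `m` on the interval `(a,b)`. -/
noncomputable def unifOn (a b m : ℝ) : Measure ℝ :=
  ENNReal.ofReal (m / (b - a)) • volume.restrict (Set.Ioo a b)

/-- The instance with `n-1` focused players and one uniform player: for
`i < n-1`, player `i` (the `(i+1)`-st player) desires only the interval
`((i+1)/n - ε, (i+1)/n + ε)`, valued `1` uniformly; player `n` (index `n-1`)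
has the Lebesgue measure on `[0,1]`. -/
noncomputable def vFoc (n : ℕ) (ε : ℝ) : Fin n → Measure ℝ := fun i =>
  if i.val < n - 1 then
    unifOn (((i.val : ℝ) + 1)/n - ε) (((i.val : ℝ) + 1)/n + ε) 1
  else volume.restrict (Set.Icc (0:ℝ) 1)

/-!
The uniform player values pieces by their length, so no piece is longer than hers. If her
piece were longer than `1/n`, it would contain some point `i/n` in its interior; being longer
than `2ε`, it would then cover more than half of the window `(i/n - ε, i/n + ε)` of focused
player `i`, who would envy it. Hence all `n` pieces have length exactly `1/n`, and `n` disjoint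
open intervals of length `1/n` in `[0,1]` are the grid intervals. A grid interval meets at most
half of a focused player's window, and envy-freeness towards the owner of the grid interval
ending at her point gives her at least `1/2`.
-/

theorem Set.Ioo_subset_Icc_iff {α : Type*} [TopologicalSpace α] [LinearOrder α]
    [OrderTopology α] [DenselyOrdered α] {a b c e : α} (hab : a < b) :
    Ioo a b ⊆ Icc c e ↔ c ≤ a ∧ b ≤ e :=
  ⟨fun h => (Icc_subset_Icc_iff hab.le).1
      (closure_Ioo hab.ne ▸ closure_minimal h isClosed_Icc),
    fun h => Ioo_subset_Icc_self.trans (Icc_subset_Icc h.1 h.2)⟩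

theorem ENNReal.eq_of_forall_le_of_sum_eq {ι : Type*} [Fintype ι] {f : ι → ℝ≥0∞} {c : ℝ≥0∞}
    (hc : c ≠ ∞) (hle : ∀ i, f i ≤ c) (hsum : ∑ i, f i = ∑ _i : ι, c) (j : ι) : f j = c := by
  have hf : ∀ i, f i ≠ ∞ := fun i => ne_top_of_le_ne_top hc (hle i)
  have hreal : ∑ i, (f i).toReal = ∑ _i : ι, c.toReal := by
    rw [← ENNReal.toReal_sum fun i _ => hf i, hsum, ENNReal.toReal_sum fun _ _ => hc]
  have := (Finset.sum_eq_sum_iff_of_le fun i _ => ENNReal.toReal_mono hc (hle i)).1 hreal j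
    (Finset.mem_univ j)
  exact (ENNReal.toReal_eq_toReal_iff' (hf j) hc).1 this

theorem exists_natCast_succ_div_mem_Ioo {n : ℕ} (hn : 0 < n) {a b : ℝ} (ha : 0 ≤ a)
    (hab : a + 1 / n < b) : ∃ k : ℕ, ((k : ℝ) + 1) / n ∈ Ioo a b := by
  have hn' : (0 : ℝ) < n := by exact_mod_cast hn
  have hfloor := Nat.floor_le (mul_nonneg ha hn'.le)
  refine ⟨⌊a * n⌋₊, ?_, ?_⟩
  · rw [lt_div_iff₀ hn']
    linarith [Nat.lt_floor_add_one (a * n)]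
  · rw [div_lt_iff₀ hn']
    have : (a + 1 / n) * n = a * n + 1 := by field_simp
    nlinarith

theorem natCast_div_notMem_Ioo (n k l : ℕ) :
    (l : ℝ) / n ∉ Ioo ((k : ℝ) / n) (((k : ℝ) + 1) / n) := by
  rintro ⟨h₁, h₂⟩
  rcases n.eq_zero_or_pos with rfl | hn
  · simp at h₁
  have hn' : (0 : ℝ) < n := by exact_mod_cast hn
  rw [div_lt_div_iff_of_pos_right hn'] at h₁ h₂
  have : k < l := by exact_mod_cast h₁
  have : l < k + 1 := by exact_mod_cast h₂
  omega

section Window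

variable {a b m ε : ℝ}

theorem volume_inter_Ioo_lt_of_disjoint {P : Set ℝ} (hε : 0 < ε) (hP : Disjoint P (Ioo a b))
    (hm : m ∈ Ioo a b) (hab : 2 * ε < b - a) :
    volume (P ∩ Ioo (m - ε) (m + ε)) < volume (Ioo a b ∩ Ioo (m - ε) (m + ε)) := by
  set W := Ioo (m - ε) (m + ε)
  set x := min b (m + ε) - max a (m - ε)
  have hx : ε < x := by
    rcases max_cases a (m - ε) with ⟨h₁, _⟩ | ⟨h₁, _⟩ <;>
      rcases min_cases b (m + ε) with ⟨h₂, _⟩ | ⟨h₂, _⟩ <;>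
      simp only [x, h₁, h₂] <;> linarith [hm.1, hm.2]
  have hQ : volume (Ioo a b ∩ W) = ENNReal.ofReal x := by rw [Ioo_inter_Ioo, Real.volume_Ioo]
  rw [← not_le]
  intro hle
  -- `P ∩ W` and `Ioo a b ∩ W` are disjoint parts of `W`, but each would be longer than `ε`.
  have : ENNReal.ofReal (x + x) ≤ ENNReal.ofReal (2 * ε) := calc
    ENNReal.ofReal (x + x) = volume (Ioo a b ∩ W) + volume (Ioo a b ∩ W) := by
      rw [hQ, ENNReal.ofReal_add] <;> linarith
    _ ≤ volume (P ∩ W) + volume (Ioo a b ∩ W) := add_le_add_left hle _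
    _ = volume (P ∩ W ∪ Ioo a b ∩ W) :=
      (measure_union (hP.mono inter_subset_left inter_subset_left)
        (measurableSet_Ioo.inter measurableSet_Ioo)).symm
    _ ≤ volume W := measure_mono (union_subset inter_subset_right inter_subset_right)
    _ = ENNReal.ofReal (2 * ε) := by rw [Real.volume_Ioo]; ring_nf
  linarith [(ENNReal.ofReal_le_ofReal_iff (by positivity)).1 this]

theorem volume_Ioo_inter_Ioo_le_of_notMem (hm : m ∉ Ioo a b) :
    volume (Ioo a b ∩ Ioo (m - ε) (m + ε)) ≤ ENNReal.ofReal ε := by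
  rw [Ioo_inter_Ioo, Real.volume_Ioo]
  apply ENNReal.ofReal_le_ofReal
  rw [mem_Ioo, not_and_or, not_lt, not_lt] at hm
  rcases hm with h | h
  · linarith [le_max_left a (m - ε), min_le_right b (m + ε)]
  · linarith [min_le_left b (m + ε), le_max_right a (m - ε)]

theorem volume_Ioo_inter_Ioo_of_le (hε : 0 ≤ ε) (h : ε ≤ a) :
    volume (Ioo (m - a) m ∩ Ioo (m - ε) (m + ε)) = ENNReal.ofReal ε := by
  rw [Ioo_inter_Ioo, max_eq_right (by linarith), min_eq_left (by linarith), Real.volume_Ioo,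
    sub_sub_cancel]

end Window

namespace ConnDiv

variable {n : ℕ} (d : ConnDiv n)

theorem measurableSet_pieces (i : Fin n) : MeasurableSet (d.pieces i) := by
  obtain ⟨a, b, h⟩ := d.isInterval i
  exact h ▸ measurableSet_Ioo

theorem volume_closure_pieces (i : Fin n) :
    volume (closure (d.pieces i)) = volume (d.pieces i) := by
  obtain ⟨a, b, h⟩ := d.isInterval i
  exact measure_closure_of_null_frontier (h ▸ (convex_Ioo a b).addHaar_frontier volume)

theorem sum_volume_pieces (hc : d.Complete) : ∑ i, volume (d.pieces i) = 1 := by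
  have hU : volume (⋃ i, d.pieces i) = ∑ i, volume (d.pieces i) := by
    rw [measure_iUnion d.disj d.measurableSet_pieces, tsum_fintype]
  apply le_antisymm
  · calc ∑ i, volume (d.pieces i) = volume (⋃ i, d.pieces i) := hU.symm
      _ ≤ volume (Icc (0 : ℝ) 1) := measure_mono (iUnion_subset d.subset)
      _ = 1 := by simp
  · calc (1 : ℝ≥0∞) = volume (Icc (0 : ℝ) 1) := by simp
      _ ≤ volume (⋃ i, closure (d.pieces i)) := measure_mono hc
      _ ≤ ∑ i, volume (closure (d.pieces i)) := measure_iUnion_fintype_le _ _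
      _ = ∑ i, volume (d.pieces i) := by simp only [d.volume_closure_pieces]

theorem sum_volume_pieces_le {s : Finset (Fin n)} {T : Set ℝ} (hs : ∀ i ∈ s, d.pieces i ⊆ T) :
    ∑ i ∈ s, volume (d.pieces i) ≤ volume T := by
  rw [← measure_biUnion_finset (d.disj.set_pairwise _) fun i _ => d.measurableSet_pieces i]
  exact measure_mono (iUnion₂_subset hs)

variable {d}

theorem exists_eq_Ioo_of_volume_eq {i : Fin n}
    (hi : volume (d.pieces i) = ENNReal.ofReal (1 / n)) :
    ∃ a : ℝ, 0 ≤ a ∧ a + 1 / n ≤ 1 ∧ d.pieces i = Ioo a (a + 1 / n) := by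
  obtain ⟨a, b, h⟩ := d.isInterval i
  have hn : (0 : ℝ) < 1 / n := by have := i.pos; positivity
  rw [h, Real.volume_Ioo] at hi
  have hab : b - a = 1 / n := by
    have := ENNReal.ofReal_pos.1 (hi ▸ ENNReal.ofReal_pos.2 hn)
    exact (ENNReal.ofReal_eq_ofReal_iff this.le hn.le).1 hi
  obtain ⟨ha, hb⟩ := (Ioo_subset_Icc_iff (by linarith)).1 (h ▸ d.subset i)
  exact ⟨a, ha, by linarith, by rw [h, ← hab, add_sub_cancel]⟩

/-- Pieces of equal length `1/n` tile `[0,1]`, so they sit on the grid: the left endpoint of a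
piece is `k/n` for `k` the number of pieces to its left. -/
theorem pieces_eq_grid_of_volume_eq (h : ∀ i, volume (d.pieces i) = ENNReal.ofReal (1 / n))
    (j : Fin n) : ∃ k : ℕ, k < n ∧ d.pieces j = Ioo ((k : ℝ) / n) (((k : ℝ) + 1) / n) := by
  choose a ha₀ ha₁ hI using fun i => exists_eq_Ioo_of_volume_eq (h i)
  have hn : (0 : ℝ) < n := by exact_mod_cast j.pos
  have card_div_le {s : Finset (Fin n)} {c e : ℝ} (hce : c ≤ e)
      (hs : ∀ i ∈ s, d.pieces i ⊆ Icc c e) : (s.card : ℝ) / n ≤ e - c := by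
    have := d.sum_volume_pieces_le hs
    rw [Finset.sum_congr rfl fun i _ => h i, Finset.sum_const, nsmul_eq_mul,
      Real.volume_Icc] at this
    rw [← ENNReal.ofReal_natCast, ← ENNReal.ofReal_mul (by positivity),
      ENNReal.ofReal_le_ofReal_iff (by linarith)] at this
    rwa [mul_one_div] at this
  set L := Finset.univ.filter fun i => a i + 1 / n ≤ a j
  set R := Finset.univ.filter fun i => a j + 1 / n ≤ a i
  have hL := card_div_le (s := L) (ha₀ j) fun i hi => by
    rw [hI]; exact Ioo_subset_Icc_self.trans (Icc_subset_Icc (ha₀ i) (Finset.mem_filter.1 hi).2)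
  have hR := card_div_le (s := R) (ha₁ j) fun i hi => by
    rw [hI]; exact Ioo_subset_Icc_self.trans (Icc_subset_Icc (Finset.mem_filter.1 hi).2 (ha₁ i))
  have hcover : Finset.univ.erase j ⊆ L ∪ R := by
    intro i hi
    have hdisj : Disjoint (d.pieces i) (d.pieces j) := d.disj (Finset.ne_of_mem_erase hi)
    rw [hI, hI, Ioo_disjoint_Ioo] at hdisj
    simp only [Finset.mem_union, Finset.mem_filter, Finset.mem_univ, true_and, L, R]
    by_contra! hlt
    exact hdisj.not_gt (max_lt (lt_min (by linarith) hlt.2) (lt_min hlt.1 (by linarith)))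
  have hcard : 1 - 1 / n ≤ (L.card : ℝ) / n + R.card / n := by
    have := (Finset.card_le_card hcover).trans (Finset.card_union_le L R)
    rw [Finset.card_erase_of_mem (Finset.mem_univ j), Finset.card_univ, Fintype.card_fin] at this
    have : (n : ℝ) ≤ L.card + R.card + 1 := by
      exact_mod_cast (by omega : n ≤ L.card + R.card + 1)
    rw [← add_div, le_div_iff₀ hn, sub_mul, one_div_mul_cancel hn.ne', one_mul]
    linarith
  have haj : a j = L.card / n := by linarith
  have hk : L.card < n := by
    have : ((L.card : ℝ) + 1) / n ≤ 1 := by rw [add_div, ← haj]; exact ha₁ j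
    rw [div_le_one hn] at this
    exact_mod_cast (by linarith : (L.card : ℝ) < n)
  exact ⟨L.card, hk, by rw [hI, haj, add_div]⟩

theorem exists_pieces_eq_grid (hc : d.Complete)
    (hgrid : ∀ j, ∃ k : ℕ, k < n ∧ d.pieces j = Ioo ((k : ℝ) / n) (((k : ℝ) + 1) / n))
    {i : ℕ} (hi : i < n) : ∃ j, d.pieces j = Ioo ((i : ℝ) / n) (((i : ℝ) + 1) / n) := by
  have hn : (0 : ℝ) < n := by exact_mod_cast (i.zero_le.trans_lt hi)
  have hx : ((i : ℝ) + 1 / 2) / n ∈ Icc (0 : ℝ) 1 := by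
    refine ⟨by positivity, (div_le_one hn).2 ?_⟩
    have : (i : ℝ) + 1 ≤ n := by exact_mod_cast hi
    linarith
  obtain ⟨j, hj⟩ := mem_iUnion.1 (hc hx)
  obtain ⟨k, -, hk⟩ := hgrid j
  rw [hk, closure_Ioo (by rw [Ne, div_left_inj' hn.ne']; linarith), mem_Icc,
    div_le_div_iff_of_pos_right hn, div_le_div_iff_of_pos_right hn] at hj
  have hki : k = i := by
    have h₁ : k < i + 1 := by exact_mod_cast (by linarith [hj.1] : (k : ℝ) < i + 1)
    have h₂ : i < k + 1 := by exact_mod_cast (by linarith [hj.2] : (i : ℝ) < k + 1)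
    omega
  exact ⟨j, hki ▸ hk⟩

end ConnDiv

section vFoc

variable {n : ℕ} {ε : ℝ}

theorem vFoc_apply_of_lt {i : Fin n} (hi : i.val < n - 1) (S : Set ℝ) :
    vFoc n ε i S = ENNReal.ofReal (1 / (2 * ε)) *
      volume (S ∩ Ioo (((i : ℝ) + 1) / n - ε) (((i : ℝ) + 1) / n + ε)) := by
  rw [vFoc, if_pos hi, unifOn, Measure.smul_apply, Measure.restrict_apply' measurableSet_Ioo,
    smul_eq_mul]
  ring_nf

theorem vFoc_apply_of_not_lt {i : Fin n} (hi : ¬ i.val < n - 1) {S : Set ℝ}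
    (hS : S ⊆ Icc 0 1) : vFoc n ε i S = volume S := by
  rw [vFoc, if_neg hi, Measure.restrict_eq_self _ hS]

theorem ofReal_one_div_two_mul_mul_ofReal (hε : 0 < ε) :
    ENNReal.ofReal (1 / (2 * ε)) * ENNReal.ofReal ε = ENNReal.ofReal (1 / 2) := by
  rw [← ENNReal.ofReal_mul (by positivity)]
  congr 1
  field_simp

variable {d : ConnDiv n}

/-- The piece `(a, b)` covers more than half of player `i`'s window, so she would envy it. -/
theorem EnvyFree.eq_of_mem_Ioo (hEF : EnvyFree (vFoc n ε) d) (hε : 0 < ε) {i j : Fin n}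
    (hi : i.val < n - 1) {a b : ℝ} (hj : d.pieces j = Ioo a b)
    (hm : ((i : ℝ) + 1) / n ∈ Ioo a b) (hab : 2 * ε < b - a) : j = i := by
  by_contra hji
  have hdisj : Disjoint (d.pieces i) (Ioo a b) := hj ▸ d.disj (Ne.symm hji)
  have hlt := volume_inter_Ioo_lt_of_disjoint hε hdisj hm hab
  have henvy := hEF i j
  rw [vFoc_apply_of_lt hi, vFoc_apply_of_lt hi, hj] at henvy
  exact henvy.not_gt (ENNReal.mul_lt_mul_right (by simp [hε]) ENNReal.ofReal_ne_top hlt)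

theorem EnvyFree.volume_pieces_eq (hEF : EnvyFree (vFoc n ε) d) (hε : 0 < ε)
    (h2ε : 2 * ε < 1 / n) (hc : d.Complete) (j : Fin n) :
    volume (d.pieces j) = ENNReal.ofReal (1 / n) := by
  have hn : 0 < n := j.pos
  set last : Fin n := ⟨n - 1, by omega⟩
  have hlast : ¬ last.val < n - 1 := lt_irrefl _
  have hle : ∀ i, volume (d.pieces i) ≤ volume (d.pieces last) := fun i => by
    simpa only [vFoc_apply_of_not_lt hlast (d.subset _)] using hEF last i
  -- A longer last piece would contain a grid point in its interior.
  have hlast_le : volume (d.pieces last) ≤ ENNReal.ofReal (1 / n) := by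
    by_contra! hgt
    obtain ⟨a, b, hlastI⟩ := d.isInterval last
    rw [hlastI, Real.volume_Ioo, ENNReal.ofReal_lt_ofReal_iff'] at hgt
    obtain ⟨ha, hb⟩ := (Ioo_subset_Icc_iff (by linarith)).1 (hlastI ▸ d.subset last)
    obtain ⟨k, hk⟩ := exists_natCast_succ_div_mem_Ioo hn ha (b := b) (by linarith)
    have hkn : k < n - 1 := by
      have : ((k : ℝ) + 1) / n < 1 := hk.2.trans_le hb
      rw [div_lt_one (by exact_mod_cast hn)] at this
      have : k + 1 < n := by exact_mod_cast this
      omega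
    have := hEF.eq_of_mem_Ioo hε (i := ⟨k, by omega⟩) hkn hlastI hk (by linarith)
    exact absurd (congrArg Fin.val this) (by simp [last]; omega)
  refine ENNReal.eq_of_forall_le_of_sum_eq ENNReal.ofReal_ne_top
    (fun i => (hle i).trans hlast_le) ?_ j
  rw [d.sum_volume_pieces hc, Finset.sum_const, Finset.card_univ, Fintype.card_fin,
    nsmul_eq_mul, ← ENNReal.ofReal_natCast, ← ENNReal.ofReal_mul (by positivity),
    mul_one_div_cancel (by exact_mod_cast hn.ne'), ENNReal.ofReal_one]

theorem EnvyFree.vFoc_apply_pieces_self (hEF : EnvyFree (vFoc n ε) d) (hε : 0 < ε)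
    (hεn : ε ≤ 1 / n) (hc : d.Complete)
    (hgrid : ∀ j, ∃ k : ℕ, k < n ∧ d.pieces j = Ioo ((k : ℝ) / n) (((k : ℝ) + 1) / n))
    {i : Fin n} (hi : i.val < n - 1) : vFoc n ε i (d.pieces i) = ENNReal.ofReal (1 / 2) := by
  set m : ℝ := ((i : ℝ) + 1) / n
  rw [← ofReal_one_div_two_mul_mul_ofReal hε]
  apply le_antisymm
  · obtain ⟨k, -, hk⟩ := hgrid i
    rw [vFoc_apply_of_lt hi, hk]
    gcongr
    -- a grid piece cannot contain the grid point `m`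
    refine volume_Ioo_inter_Ioo_le_of_notMem ?_
    simpa [m] using natCast_div_notMem_Ioo n k (i + 1)
  · -- the grid piece ending at `m` covers half of player `i`'s window, and someone owns it
    obtain ⟨j, hj⟩ := d.exists_pieces_eq_grid hc hgrid i.isLt
    have hleft : (i : ℝ) / n = m - 1 / n := by simp only [m]; ring
    calc ENNReal.ofReal (1 / (2 * ε)) * ENNReal.ofReal ε = vFoc n ε i (d.pieces j) := by
          rw [vFoc_apply_of_lt hi, hj, hleft, volume_Ioo_inter_Ioo_of_le hε.le hεn]
      _ ≤ vFoc n ε i (d.pieces i) := hEF i j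

end vFoc

/-- Every envy-free complete connected division of the focused-players instance
cuts the cake exactly at the points `i/n`; player `n` gets utility `1/n` and
every focused player gets utility `1/2`. -/
theorem cuts_at_multiples (n : ℕ) (hn : 2 < n) (ε : ℝ) (hε : 0 < ε)
    (hε' : ε < 1/((n:ℝ)*(n+1)))
    (d : ConnDiv n) (hc : d.Complete) (hEF : EnvyFree (vFoc n ε) d) :
    (∀ i : Fin n, ∃ k : ℕ, k < n ∧ d.pieces i = Set.Ioo ((k:ℝ)/n) (((k:ℝ)+1)/n)) ∧
    (∀ i : Fin n, i.val < n - 1 →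
      vFoc n ε i (d.pieces i) = ENNReal.ofReal (1/2)) ∧
    vFoc n ε ⟨n-1, by omega⟩ (d.pieces ⟨n-1, by omega⟩) = ENNReal.ofReal (1/(n:ℝ)) := by
  have h2ε : 2 * ε < 1 / n := by
    have hn' : (2 : ℝ) < n := by exact_mod_cast hn
    have : 1 / ((n : ℝ) * (n + 1)) ≤ 1 / (2 * n) :=
      one_div_le_one_div_of_le (by positivity) (by nlinarith)
    calc 2 * ε < 2 * (1 / (2 * n)) := by linarith
      _ = 1 / n := by field_simp
  have hvol := hEF.volume_pieces_eq hε h2ε hc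
  have hgrid := ConnDiv.pieces_eq_grid_of_volume_eq hvol
  refine ⟨hgrid, fun i hi => hEF.vFoc_apply_pieces_self hε (by linarith) hc hgrid hi, ?_⟩
  rw [vFoc_apply_of_not_lt (by simp) (d.subset _), hvol]
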